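/- For any real a > −1, the operator Ψ_a p := −x·p' + (x−(a+1))·p is a complex zero decreasing operator: for every real polynomial p, the number of non-real zeros of −x·p'(x) + (x−(a+1))·p(x) is at most the number of non-real zeros of p (both counted with multiplicity). -/

import Mathlib

open Polynomial Finset

open scoped Classical in
/-- Number of non-real complex zeros of a real polynomial, counted with multiplicity. -/
noncomputable def ZC (p : Polynomial ℝ) : ℕ :=
  (((p.map (algebraMap ℝ ℂ)).roots).filter (fun z => z.im ≠ 0)).card

/-- Number of real zeros of a real polynomial, counted with multiplicity. -/
noncomputable def ZR (p : Polynomial ℝ) : ℕ := p.roots.card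

/-- The differential operator Ψₐ = -xD + (x-(a+1))I on ℝ[x]. -/
noncomputable def Psi (a : ℝ) (p : Polynomial ℝ) : Polynomial ℝ :=
  -X * derivative p + (X - C (a + 1)) * p

/-!
For `x ≠ 0`, `Psi a p = -|x| ^ (-a) * exp x * sign x * (|x| ^ (a + 1) * exp (-x) * p)'`, and since
`a > -1` the bracket vanishes at `0` as well as at the real roots of `p`. Rolle's theorem therefore
gives a root of `Psi a p` strictly between any two consecutive points of `{0} ∪ roots p`; together
with the fact that a root of `p` of multiplicity `m` is a root of `Psi a p` of multiplicity at least
`m - 1` (at least `m` when it is `0`), `Psi a p` has at least as many real roots as `p`. As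
`deg Psi a p = deg p + 1`, this gives `ZC (Psi a p) ≤ ZC p + 1`, and non-real roots come in
conjugate pairs.
-/

open Set Real

lemma coeff_psi_natDegree_succ (a : ℝ) (p : ℝ[X]) :
    (Psi a p).coeff (p.natDegree + 1) = p.leadingCoeff := by
  have hp : p.coeff (p.natDegree + 1) = 0 := coeff_eq_zero_of_natDegree_lt (lt_add_one _)
  simp only [Psi, neg_mul, coeff_add, coeff_neg, coeff_X_mul, sub_mul, coeff_sub, coeff_C_mul,
    coeff_derivative, hp, leadingCoeff]
  ring

lemma psi_ne_zero (a : ℝ) {p : ℝ[X]} (hp : p ≠ 0) : Psi a p ≠ 0 := fun h =>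
  leadingCoeff_ne_zero.2 hp (by simpa [h] using (coeff_psi_natDegree_succ a p).symm)

lemma natDegree_psi (a : ℝ) {p : ℝ[X]} (hp : p ≠ 0) :
    (Psi a p).natDegree = p.natDegree + 1 := by
  refine natDegree_eq_of_le_of_coeff_ne_zero ?_ (by simpa [coeff_psi_natDegree_succ])
  unfold Psi
  refine natDegree_add_le_of_degree_le ?_ ?_
  · grw [natDegree_mul_le, natDegree_neg, natDegree_X, natDegree_derivative_le]
    omega
  · grw [natDegree_mul_le, natDegree_X_sub_C]
    omega

lemma pow_sub_one_dvd_psi (a : ℝ) {p : ℝ[X]} {t : ℝ} {n : ℕ} (h : (X - C t) ^ n ∣ p) :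
    (X - C t) ^ (n - 1) ∣ Psi a p :=
  ((pow_sub_one_dvd_derivative_of_pow_dvd h).mul_left _).add
    (((pow_dvd_pow _ (n.sub_le 1)).trans h).mul_left _)

lemma X_pow_dvd_psi (a : ℝ) {p : ℝ[X]} {n : ℕ} (h : X ^ n ∣ p) : X ^ n ∣ Psi a p := by
  refine (Dvd.dvd.add ?_ (h.mul_left _))
  rcases n with _ | n
  · simp
  rw [neg_mul, dvd_neg, pow_succ']
  exact mul_dvd_mul_left X (by simpa using pow_sub_one_dvd_derivative_of_pow_dvd h)

lemma rootMultiplicity_le_rootMultiplicity_psi_add_one (a : ℝ) {p : ℝ[X]} (hp : p ≠ 0)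
    (t : ℝ) :
    p.rootMultiplicity t ≤ (Psi a p).rootMultiplicity t + 1 := by
  have := (le_rootMultiplicity_iff (psi_ne_zero a hp)).2
    (pow_sub_one_dvd_psi a (p.pow_rootMultiplicity_dvd t))
  omega

lemma rootMultiplicity_zero_le_rootMultiplicity_psi (a : ℝ) {p : ℝ[X]} (hp : p ≠ 0) :
    p.rootMultiplicity 0 ≤ (Psi a p).rootMultiplicity 0 :=
  (le_rootMultiplicity_iff (psi_ne_zero a hp)).2 <| by
    simpa using X_pow_dvd_psi a (by simpa using p.pow_rootMultiplicity_dvd 0)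

lemma hasDerivAt_rpow_mul_exp_mul_eval (a : ℝ) (p : ℝ[X]) {s x : ℝ} (hx : 0 < s * x) :
    HasDerivAt (fun x => (s * x) ^ (a + 1) * (exp (-x) * p.eval x))
      (-(s * (s * x) ^ a * exp (-x) * (Psi a p).eval x)) x := by
  have hpow := ((hasDerivAt_id' x).const_mul s).rpow_const (p := a + 1) (Or.inl hx.ne')
  refine (hpow.mul ((hasDerivAt_neg' x).exp.mul (p.hasDerivAt x))).congr_deriv ?_
  rw [add_sub_cancel_right, rpow_add_one hx.ne']
  simp only [Psi, eval_add, eval_mul, eval_neg, eval_X, eval_sub, eval_C, Pi.mul_apply]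
  ring

/-- Rolle's theorem for `|x| ^ (a + 1) * exp (-x) * p x`, written with `(s * x) ^ (a + 1)` where
`s = ±1` is the sign of `x` on `(u, v)`. -/
lemma exists_isRoot_psi_mem_Ioo {a : ℝ} (ha : -1 < a) (p : ℝ[X]) {u v : ℝ} (huv : u < v)
    (h0 : (0 : ℝ) ∉ Ioo u v) (hu : u = 0 ∨ p.IsRoot u) (hv : v = 0 ∨ p.IsRoot v) :
    ∃ c ∈ Ioo u v, (Psi a p).IsRoot c := by
  obtain ⟨s, hs⟩ : ∃ s : ℝ, ∀ x ∈ Ioo u v, 0 < s * x := by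
    by_cases hu0 : 0 ≤ u
    · exact ⟨1, fun x hx => by linarith [hx.1]⟩
    · have hv0 : v ≤ 0 := by
        by_contra hv0
        exact h0 ⟨by linarith, by linarith⟩
      exact ⟨-1, fun x hx => by linarith [hx.2]⟩
  set g : ℝ → ℝ := fun x => (s * x) ^ (a + 1) * (exp (-x) * p.eval x)
  have hg : ∀ w, w = 0 ∨ p.IsRoot w → g w = 0 := by
    rintro w (rfl | hw)
    · simp [g, zero_rpow (by linarith : a + 1 ≠ 0)]
    · simp [g, hw.eq_zero]
  have hcont : Continuous g :=
    ((continuous_const.mul continuous_id).rpow_const fun _ => Or.inr (by linarith)).mul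
      ((continuous_exp.comp continuous_neg).mul p.continuous)
  obtain ⟨c, hc, hgc⟩ := exists_hasDerivAt_eq_zero huv hcont.continuousOn
    ((hg u hu).trans (hg v hv).symm)
    fun x hx => hasDerivAt_rpow_mul_exp_mul_eval a p (hs x hx)
  have hsc : 0 < s * c := hs c hc
  have hs0 : s ≠ 0 := by rintro rfl; simp at hsc
  refine ⟨c, hc, ?_⟩
  simpa [hs0, (rpow_pos_of_pos hsc a).ne', (exp_pos _).ne'] using hgc

lemma Multiset.sum_count_add_card_toFinset_sdiff_le {α : Type*} [DecidableEq α]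
    (m : Multiset α) (s : Finset α) : ∑ x ∈ s, m.count x + #(m.toFinset \ s) ≤ m.card :=
  calc ∑ x ∈ s, m.count x + #(m.toFinset \ s)
      ≤ ∑ x ∈ s, m.count x + ∑ x ∈ m.toFinset \ s, m.count x := by
        rw [card_eq_sum_ones]
        gcongr with x hx
        exact Multiset.count_pos.2 (Multiset.mem_toFinset.1 (mem_sdiff.1 hx).1)
    _ = m.card := by
        rw [← sum_union disjoint_sdiff, union_sdiff_self_eq_union]
        exact Multiset.sum_count_eq_card fun x hx => mem_union_right _ (Multiset.mem_toFinset.2 hx)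

lemma card_roots_le_card_roots_psi {a : ℝ} (ha : -1 < a) {p : ℝ[X]} (hp : p ≠ 0) :
    p.roots.card ≤ (Psi a p).roots.card := by
  classical
  set q := Psi a p
  set T := insert 0 p.roots.toFinset
  have hT : ∀ t ∈ T, t = 0 ∨ p.IsRoot t := by simp [T, mem_roots hp]
  have h0T : (0 : ℝ) ∈ T := mem_insert_self _ _
  have hq : q ≠ 0 := psi_ne_zero a hp
  have hinterleaved : #T ≤ #(q.roots.toFinset \ T) + 1 :=
    card_le_sdiff_of_interleaved fun u hu v hv huv hgap => by
      obtain ⟨c, hc, hqc⟩ :=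
        exists_isRoot_psi_mem_Ioo ha p huv (hgap 0 h0T) (hT u hu) (hT v hv)
      exact ⟨c, Multiset.mem_toFinset.2 ((mem_roots hq).2 hqc), hc⟩
  calc p.roots.card = ∑ t ∈ T, p.rootMultiplicity t := by
        simp_rw [← count_roots]
        exact (Multiset.sum_count_eq_card fun x hx => mem_insert_of_mem (by simpa using hx)).symm
    _ = p.rootMultiplicity 0 + ∑ t ∈ T.erase 0, p.rootMultiplicity t :=
        (add_sum_erase _ _ h0T).symm
    _ ≤ q.rootMultiplicity 0 + ∑ t ∈ T.erase 0, (q.rootMultiplicity t + 1) := by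
        gcongr with t
        · exact rootMultiplicity_zero_le_rootMultiplicity_psi a hp
        · exact rootMultiplicity_le_rootMultiplicity_psi_add_one a hp t
    _ = ∑ t ∈ T, q.roots.count t + (#T - 1) := by
        rw [sum_add_distrib, ← add_assoc, add_sum_erase T (q.rootMultiplicity ·) h0T,
          ← card_eq_sum_ones, card_erase_of_mem h0T]
        simp only [count_roots]
    _ ≤ ∑ t ∈ T, q.roots.count t + #(q.roots.toFinset \ T) := by omega
    _ ≤ q.roots.card := Multiset.sum_count_add_card_toFinset_sdiff_le _ _

lemma ZC_add_ZR (p : ℝ[X]) : ZC p + ZR p = p.natDegree := by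
  classical
  have hreal : ∀ z : ℂ, ¬z.im ≠ 0 ↔ z ∈ (algebraMap ℝ ℂ).range := fun z =>
    ⟨fun h => ⟨z.re, Complex.ext (by simp) (by simpa using (not_not.1 h).symm)⟩,
      by rintro ⟨x, rfl⟩; simp⟩
  have hinj := (algebraMap ℝ ℂ).injective
  rw [ZC, ZR, ← IsAlgClosed.card_roots_map_eq_natDegree_of_injective p hinj]
  conv_rhs =>
    rw [← Multiset.filter_add_not (fun z : ℂ => z.im ≠ 0) (p.map (algebraMap ℝ ℂ)).roots]
  rw [Multiset.card_add, Multiset.filter_congr fun z _ => hreal z,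
    filter_roots_map_range_eq_map_roots hinj, Multiset.card_map]

lemma even_ZC (p : ℝ[X]) : Even (ZC p) := by
  classical
  set M := (p.map (algebraMap ℝ ℂ)).roots
  have hconj : M.map (starRingEnd ℂ) = M := by
    rw [← (IsAlgClosed.splits _).roots_map, Polynomial.map_map]
    congr 2
    exact RingHom.ext fun x => by simp
  have hlower :
      M.filter (fun z => z.im < 0) = (M.filter fun z => 0 < z.im).map (starRingEnd ℂ) := by
    conv_lhs => rw [← hconj]
    rw [Multiset.filter_map]
    congr 1
    exact Multiset.filter_congr fun z _ => by simp
  have hsplit : M.filter (fun z => z.im < 0) + M.filter (fun z => 0 < z.im)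
      = M.filter (fun z => z.im ≠ 0) := by
    have hdisj : ∀ z ∈ M, ¬(z.im < 0 ∧ 0 < z.im) := fun z _ h => h.1.not_gt h.2
    rw [Multiset.filter_add_filter, Multiset.filter_eq_nil.2 hdisj, add_zero]
    exact Multiset.filter_congr fun z _ => ne_iff_lt_or_gt.symm
  rw [ZC, ← hsplit, Multiset.card_add, hlower, Multiset.card_map]
  exact ⟨_, rfl⟩

theorem stmt10 (a : ℝ) (ha : -1 < a) (p : Polynomial ℝ) :
    ZC (Psi a p) ≤ ZC p := by
  rcases eq_or_ne p 0 with rfl | hp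
  · simp [Psi]
  have hcount := ZC_add_ZR (Psi a p)
  rw [natDegree_psi a hp, ← ZC_add_ZR p] at hcount
  have hZR : ZR p ≤ ZR (Psi a p) := card_roots_le_card_roots_psi ha hp
  obtain ⟨m, hm⟩ := even_ZC p
  obtain ⟨k, hk⟩ := even_ZC (Psi a p)
  omega
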